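/- Let F = (f_i)_{i ∈ ℕ} be a sequence of bounded functions ℕ → ℂ with AE(F) < +∞. Then for every ε > 0 there exists δ > 0 such that for every sequence G = (g_i)_{i ∈ ℕ} of bounded functions ℕ → ℂ with sup_{i ∈ ℕ} ‖g_i − f_i‖_∞ < δ, one has AE(G) > AE(F) − ε. -/

import Mathlib

open Filter Set Topology

namespace Anqie

variable {X : Type*} [TopologicalSpace X]

/-- `𝒰` is an open cover of `X`. -/
def IsOpenCover (𝒰 : Set (Set X)) : Prop :=
  (∀ U ∈ 𝒰, IsOpen U) ∧ ⋃₀ 𝒰 = Set.univ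

/-- The common refinement `𝒰 ∨ T⁻¹ 𝒰 ∨ ⋯ ∨ T^{-(n-1)} 𝒰`. -/
def iterJoin (T : X → X) (𝒰 : Set (Set X)) (n : ℕ) : Set (Set X) :=
  {V | ∃ u : Fin n → Set X, (∀ j, u j ∈ 𝒰) ∧ V = ⋂ j : Fin n, T^[(j : ℕ)] ⁻¹' u j}

/-- The minimal cardinality of a finite subcover of `𝒱` (junk value `0` if none exists). -/
noncomputable def coverNum (𝒱 : Set (Set X)) : ℕ :=
  sInf {k | ∃ F : Finset (Set X), (↑F : Set (Set X)) ⊆ 𝒱 ∧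
    ⋃₀ (↑F : Set (Set X)) = Set.univ ∧ F.card = k}

/-- The Adler–Konheim–McAndrew entropy of `T` relative to the open cover `𝒰`. -/
noncomputable def coverEntropy (T : X → X) (𝒰 : Set (Set X)) : EReal :=
  Filter.atTop.limsup fun n : ℕ =>
    ((Real.log (coverNum (iterJoin T 𝒰 n)) / n : ℝ) : EReal)

/-- The Adler–Konheim–McAndrew topological entropy of `T`, via open covers. -/
noncomputable def entropy (T : X → X) : EReal :=
  ⨆ 𝒰 ∈ {𝒰 : Set (Set X) | IsOpenCover 𝒰}, coverEntropy T 𝒰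

/-- The set of forward-orbit sequences of `f : ℕ → X` inside `X^ℕ`. -/
def orbitSet (f : ℕ → X) : Set (ℕ → X) :=
  {ω | ∃ n : ℕ, ∀ k : ℕ, ω k = f (n + k)}

/-- `X_f`, the closure of the set of orbit sequences in the product topology. -/
def orbitClosure (f : ℕ → X) : Set (ℕ → X) := closure (orbitSet f)

lemma shift_mem_orbitClosure (f : ℕ → X) {ω : ℕ → X} (hω : ω ∈ orbitClosure f) :
    (fun k => ω (k + 1)) ∈ orbitClosure f := by
  have hcont : Continuous fun ω : ℕ → X => fun k => ω (k + 1) :=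
    continuous_pi fun k => continuous_apply (k + 1)
  have hmaps : MapsTo (fun ω : ℕ → X => fun k => ω (k + 1)) (orbitSet f) (orbitSet f) := by
    rintro ω ⟨n, hn⟩
    refine ⟨n + 1, fun k => ?_⟩
    show ω (k + 1) = f (n + 1 + k)
    rw [hn (k + 1)]; congr 1; omega
  exact map_mem_closure hcont hω hmaps

/-- `B_f`, the left shift restricted to `X_f`. -/
def shiftOn (f : ℕ → X) : orbitClosure f → orbitClosure f :=
  fun ω => ⟨fun k => (ω : ℕ → X) (k + 1), shift_mem_orbitClosure f ω.2⟩

/-- The anqie entropy of a map `f : ℕ → X`: the AKM topological entropy of the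
left shift on `X_f`. -/
noncomputable def AE (f : ℕ → X) : EReal := entropy (shiftOn f)

end Anqie

namespace Anqie

/-- The sequence in `(ℂ^I)^ℕ` attached to a family `(f_i)_{i ∈ I}` of arithmetic
functions. -/
def famSeq {I : Type*} (f : I → ℕ → ℂ) : ℕ → (I → ℂ) := fun n i => f i n

/-- The anqie entropy of a family of arithmetic functions: the AKM entropy of the
left shift on the closure of `{((f_i(n+j))_i)_j : n ∈ ℕ}` in `(ℂ^I)^ℕ`. -/
noncomputable def AEfam {I : Type*} (f : I → ℕ → ℂ) : EReal := AE (famSeq f)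

end Anqie

/-!
Fix an open cover `𝒰` of `X_F` whose entropy is within `ε` of `AE(F)`, and a Lebesgue window
`(m, s)` for it: points of `X_F` that are `s`-close in the coordinates `ω j i` with `j, i < m` lie
in a common member of `𝒰`. If `G` is uniformly `s/8`-close to `F`, let `𝒲` be the cover of `X_G` by
`s/4`-windows. Sending a member of `𝒲^(n+m)` through a `G`-orbit point at time `τ` to the member of
`𝒰^n` that contains the `F`-orbit point at time `τ` covers `X_F`, because orbit points are dense and
the `G`- and `F`-orbits shadow each other. Hence `N(𝒰^n) ≤ N(𝒲^(n+m))`, and a bounded time shift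
does not change the exponential growth rate, so `AE(G) ≥ h(𝒲) ≥ h(𝒰) > AE(F) - ε`.
-/

namespace Anqie

open Real
open scoped Uniformity ENNReal

lemma log_natCast_le_log_natCast {a b : ℕ} (h : a ≤ b) : log a ≤ log b := by
  rcases Nat.eq_zero_or_pos a with rfl | ha
  · simpa using log_natCast_nonneg b
  · exact log_le_log (by exact_mod_cast ha) (by exact_mod_cast h)

lemma limsup_div_add_le (c : ℕ → ℝ) (m : ℕ) :
    atTop.limsup (fun n : ℕ => ((c (n + m) / n : ℝ) : EReal)) ≤
      atTop.limsup (fun n : ℕ => ((c n / n : ℝ) : EReal)) := by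
  rw [limsup_le_iff]
  intro y hy
  obtain ⟨r, hr, hry⟩ := EReal.exists_between_coe_real hy
  have hc : ∀ᶠ k : ℕ in atTop, c k < r * k := by
    filter_upwards [eventually_lt_of_limsup_lt hr, eventually_gt_atTop 0] with k hk hk0
    rwa [EReal.coe_lt_coe_iff, div_lt_iff₀ (by positivity)] at hk
  have hlim : Tendsto (fun n : ℕ => ((r + r * m / n : ℝ) : EReal)) atTop (𝓝 r) := by
    simpa using EReal.tendsto_coe.2
      (tendsto_const_nhds.add (tendsto_const_div_atTop_nhds_zero_nat (r * m)))
  filter_upwards [(tendsto_add_atTop_nat m).eventually hc, eventually_gt_atTop 0,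
    hlim.eventually (gt_mem_nhds hry)] with n hn hn0 hlt
  refine lt_trans (EReal.coe_lt_coe_iff.2 ?_) hlt
  rw [div_lt_iff₀ (by positivity), add_mul, div_mul_cancel₀ _ (by positivity)]
  push_cast at hn
  linarith

section CoverEntropy

variable {X Y : Type*}

lemma coverNum_le_card {𝒱 : Set (Set X)} {C : Finset (Set X)} (hC𝒱 : ↑C ⊆ 𝒱)
    (hC : ⋃₀ (↑C : Set (Set X)) = univ) : coverNum 𝒱 ≤ C.card :=
  Nat.sInf_le ⟨C, hC𝒱, hC, rfl⟩

lemma coverEntropy_le_of_coverNum_le {T : X → X} {S : Y → Y} {𝒰 : Set (Set X)}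
    {𝒱 : Set (Set Y)} (m : ℕ)
    (h : ∀ n, coverNum (iterJoin T 𝒰 n) ≤ coverNum (iterJoin S 𝒱 (n + m))) :
    coverEntropy T 𝒰 ≤ coverEntropy S 𝒱 :=
  calc coverEntropy T 𝒰
      ≤ atTop.limsup fun n : ℕ => ((log (coverNum (iterJoin S 𝒱 (n + m))) / n : ℝ) : EReal) :=
        limsup_le_limsup (Eventually.of_forall fun n => EReal.coe_le_coe_iff.2 <|
          div_le_div_of_nonneg_right (log_natCast_le_log_natCast (h n)) n.cast_nonneg)
    _ ≤ coverEntropy S 𝒱 := limsup_div_add_le (fun n => log (coverNum (iterJoin S 𝒱 n))) m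

lemma coverEntropy_nonneg (T : X → X) (𝒰 : Set (Set X)) : 0 ≤ coverEntropy T 𝒰 :=
  le_limsup_of_frequently_le (Frequently.of_forall fun n => EReal.coe_nonneg.2 <|
    div_nonneg (log_natCast_nonneg _) n.cast_nonneg)

variable [TopologicalSpace X]

lemma IsOpenCover.exists_mem {𝒰 : Set (Set X)} (h𝒰 : IsOpenCover 𝒰) (x : X) :
    ∃ U ∈ 𝒰, x ∈ U :=
  mem_sUnion.1 (h𝒰.2 ▸ mem_univ x)

lemma isOpenCover_iterJoin {T : X → X} (hT : Continuous T) {𝒰 : Set (Set X)}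
    (h𝒰 : IsOpenCover 𝒰) (n : ℕ) : IsOpenCover (iterJoin T 𝒰 n) := by
  refine ⟨?_, eq_univ_of_forall fun x => ?_⟩
  · rintro V ⟨u, hu, rfl⟩
    exact isOpen_iInter_of_finite fun j => (h𝒰.1 _ (hu j)).preimage (hT.iterate _)
  · choose u hu hxu using fun j : Fin n => h𝒰.exists_mem (T^[j] x)
    exact ⟨_, ⟨u, hu, rfl⟩, mem_iInter.2 hxu⟩

lemma exists_finset_card_eq_coverNum [CompactSpace X] {𝒱 : Set (Set X)}
    (h𝒱 : IsOpenCover 𝒱) :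
    ∃ C : Finset (Set X), ↑C ⊆ 𝒱 ∧ ⋃₀ (↑C : Set (Set X)) = univ ∧ C.card = coverNum 𝒱 := by
  obtain ⟨𝒞, h𝒞𝒱, h𝒞, hcov⟩ := isCompact_univ.elim_finite_subcover_image (c := id) h𝒱.1
    (by simpa [← sUnion_eq_biUnion] using h𝒱.2.ge)
  refine Nat.sInf_mem (s := {k | ∃ C : Finset (Set X), ↑C ⊆ 𝒱 ∧ ⋃₀ (↑C : Set (Set X)) = univ ∧
    C.card = k}) ⟨_, h𝒞.toFinset, by simpa using h𝒞𝒱, ?_, rfl⟩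
  simpa [sUnion_eq_biUnion, ← univ_subset_iff] using hcov

lemma coverNum_le_of_forall_exists [CompactSpace X] {𝒜 : Set (Set Y)} {ℬ : Set (Set X)}
    (hℬ : IsOpenCover ℬ) (Φ : Set X → Set Y) (hΦ : ∀ V ∈ ℬ, Φ V ∈ 𝒜)
    (hcov : ∀ y, ∃ x, ∀ V ∈ ℬ, x ∈ V → y ∈ Φ V) : coverNum 𝒜 ≤ coverNum ℬ := by
  classical
  obtain ⟨C, hCℬ, hC, hcard⟩ := exists_finset_card_eq_coverNum hℬ
  have hΦC𝒜 : ↑(C.image Φ) ⊆ 𝒜 := by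
    simpa [subset_def] using fun V hV => hΦ V (hCℬ hV)
  have hΦC : ⋃₀ (↑(C.image Φ) : Set (Set Y)) = univ := by
    refine eq_univ_of_forall fun y => ?_
    obtain ⟨x, hx⟩ := hcov y
    obtain ⟨V, hVC, hxV⟩ := mem_sUnion.1 (hC ▸ mem_univ x)
    exact ⟨Φ V, by simpa using ⟨V, hVC, rfl⟩, hx V (hCℬ hVC) hxV⟩
  calc coverNum 𝒜 ≤ (C.image Φ).card := coverNum_le_card hΦC𝒜 hΦC
    _ ≤ C.card := Finset.card_image_le
    _ = coverNum ℬ := hcard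

lemma coverEntropy_le_entropy (T : X → X) {𝒰 : Set (Set X)} (h𝒰 : IsOpenCover 𝒰) :
    coverEntropy T 𝒰 ≤ entropy T :=
  le_iSup₂ (f := fun 𝒰 (_ : IsOpenCover 𝒰) => coverEntropy T 𝒰) 𝒰 h𝒰

lemma entropy_nonneg (T : X → X) : 0 ≤ entropy T :=
  (coverEntropy_nonneg T {univ}).trans <|
    coverEntropy_le_entropy T ⟨by simp, by simp⟩

lemma exists_isOpenCover_lt_coverEntropy (T : X → X) (h : entropy T ≠ ⊤) {ε : ℝ} (hε : 0 < ε) :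
    ∃ 𝒰, IsOpenCover 𝒰 ∧ entropy T - ε < coverEntropy T 𝒰 := by
  have hlt : entropy T - ε < entropy T := by
    lift entropy T to ℝ using ⟨h, (entropy_nonneg T).trans_lt' EReal.bot_lt_zero |>.ne'⟩ with e
    exact_mod_cast sub_lt_self e hε
  obtain ⟨𝒰, h𝒰, hlt𝒰⟩ := lt_biSup_iff.1 hlt
  exact ⟨𝒰, h𝒰, hlt𝒰⟩

end CoverEntropy

section OrbitClosure

variable {X : Type*} [TopologicalSpace X]

lemma continuous_shiftOn (f : ℕ → X) : Continuous (shiftOn f) := by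
  refine Continuous.subtype_mk ?_ _
  exact continuous_pi fun k => (continuous_apply (k + 1)).comp continuous_subtype_val

lemma shiftOn_iterate_apply (f : ℕ → X) (x : orbitClosure f) (j k : ℕ) :
    ((shiftOn f)^[j] x : ℕ → X) k = (x : ℕ → X) (k + j) := by
  induction j generalizing x with
  | zero => rfl
  | succ j ih => rw [Function.iterate_succ_apply, ih]; rfl

def orbitPoint (f : ℕ → X) (t : ℕ) : orbitClosure f :=
  ⟨fun k => f (t + k), subset_closure ⟨t, fun _ => rfl⟩⟩

@[simp]
lemma orbitPoint_apply (f : ℕ → X) (t k : ℕ) : (orbitPoint f t : ℕ → X) k = f (t + k) := rfl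

lemma isCompact_orbitClosure [R1Space X] {f : ℕ → X} {K : Set X} (hK : IsCompact K)
    (hf : ∀ n, f n ∈ K) : IsCompact (orbitClosure f) :=
  (isCompact_univ_pi fun _ => hK).closure_of_subset <| by
    rintro ω ⟨n, hn⟩ k -
    exact hn k ▸ hf _

end OrbitClosure

section Window

variable {E : Type*} [PseudoMetricSpace E]

def windowRel (m : ℕ) (s : ℝ) : Set ((ℕ → ℕ → E) × (ℕ → ℕ → E)) :=
  {p | ∀ j < m, ∀ i < m, dist (p.1 j i) (p.2 j i) < s}

lemma windowRel_mono {m m' : ℕ} {s s' : ℝ} (hm : m ≤ m') (hs : s' ≤ s) :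
    (windowRel m' s' : Set ((ℕ → ℕ → E) × _)) ⊆ windowRel m s :=
  fun _ hp j hj i hi => (hp j (by omega) i (by omega)).trans_le hs

lemma windowRel_mem_uniformity (m : ℕ) {s : ℝ} (hs : 0 < s) :
    windowRel m s ∈ 𝓤 (ℕ → ℕ → E) := by
  have hcoord (j i : ℕ) : UniformContinuous fun x : ℕ → ℕ → E => x j i :=
    (Pi.uniformContinuous_proj _ i).comp (Pi.uniformContinuous_proj _ j)
  have hW : windowRel m s = ⋂ j ∈ Iio m, ⋂ i ∈ Iio m,
      (fun p : (ℕ → ℕ → E) × (ℕ → ℕ → E) => (p.1 j i, p.2 j i)) ⁻¹' {q | dist q.1 q.2 < s} := by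
    ext; simp [windowRel]
  rw [hW]
  exact (biInter_mem (finite_Iio m)).2 fun j _ => (biInter_mem (finite_Iio m)).2 fun i _ =>
    hcoord j i (Metric.dist_mem_uniformity hs)

lemma uniformity_basis_windowRel :
    (𝓤 (ℕ → ℕ → E)).HasBasis (fun p : ℕ × ℝ => 0 < p.2) fun p => windowRel p.1 p.2 := by
  let W : ℕ × {s : ℝ // 0 < s} → Set ((ℕ → ℕ → E) × (ℕ → ℕ → E)) := fun p => windowRel p.1 p.2
  have hW : (⨅ p, 𝓟 (W p)).HasBasis (fun _ => True) W := hasBasis_iInf_principal fun p q =>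
    ⟨(max p.1 q.1, ⟨min p.2 q.2, lt_min p.2.2 q.2.2⟩),
      windowRel_mono (le_max_left _ _) (min_le_left _ _),
      windowRel_mono (le_max_right _ _) (min_le_right _ _)⟩
  have hle : ⨅ p, 𝓟 (W p) ≤ 𝓤 (ℕ → ℕ → E) := by
    simp only [Pi.uniformity, comap_iInf, comap_comap]
    refine le_iInf fun j => le_iInf fun i => ?_
    rw [← tendsto_iff_comap]
    exact (hW.tendsto_iff Metric.uniformity_basis_dist).2 fun ε hε =>
      ⟨(max j i + 1, ⟨ε, hε⟩), trivial, fun p hp => hp j (by omega) i (by omega)⟩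
  refine ⟨fun t => ⟨fun ht => ?_, fun ⟨p, hp, hpt⟩ =>
    mem_of_superset (windowRel_mem_uniformity p.1 hp) hpt⟩⟩
  obtain ⟨p, -, hpt⟩ := hW.mem_iff.1 (hle ht)
  exact ⟨(p.1, p.2), p.2.2, hpt⟩

lemma lebesgue_number_windowRel {K : Set (ℕ → ℕ → E)} [CompactSpace K] {𝒰 : Set (Set K)}
    (h𝒰 : IsOpenCover 𝒰) : ∃ m s, 0 < s ∧ ∀ x : K, ∃ U ∈ 𝒰, ∀ y : K,
      ((x : ℕ → ℕ → E), (y : ℕ → ℕ → E)) ∈ windowRel m s → y ∈ U := by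
  obtain ⟨V, hV, hleb⟩ := lebesgue_number_lemma_sUnion isCompact_univ h𝒰.1 h𝒰.2.ge
  obtain ⟨t, ht, htV⟩ := mem_comap.1 hV
  obtain ⟨⟨m, s⟩, hs, hst⟩ := uniformity_basis_windowRel.mem_iff.1 ht
  refine ⟨m, s, hs, fun x => ?_⟩
  obtain ⟨U, hU, hxU⟩ := hleb x (mem_univ x)
  exact ⟨U, hU, fun y hxy => hxU (htV (hst hxy))⟩

lemma isOpen_setOf_windowRel (x : ℕ → ℕ → E) (m : ℕ) (r : ℝ) :
    IsOpen {y | (x, y) ∈ windowRel m r} := by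
  have h : {y | (x, y) ∈ windowRel m r} =
      ⋂ j ∈ Iio m, ⋂ i ∈ Iio m, {y : ℕ → ℕ → E | dist (x j i) (y j i) < r} := by
    ext; simp [windowRel]
  rw [h]
  exact (finite_Iio m).isOpen_biInter fun j _ => (finite_Iio m).isOpen_biInter fun i _ =>
    isOpen_lt (by fun_prop) continuous_const

lemma exists_windowRel_orbitPoint {f : ℕ → ℕ → E} (x : orbitClosure f) (m : ℕ) {s : ℝ}
    (hs : 0 < s) : ∃ t, ((x : ℕ → ℕ → E), (orbitPoint f t : ℕ → ℕ → E)) ∈ windowRel m s := by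
  obtain ⟨p, hxp, t, hp⟩ := mem_closure_iff_nhds.1 x.2 _
    (UniformSpace.ball_mem_nhds _ (windowRel_mem_uniformity m hs))
  rw [funext hp] at hxp
  exact ⟨t, hxp⟩

def windowCover (K : Set (ℕ → ℕ → E)) (m : ℕ) (r : ℝ) : Set (Set K) :=
  range fun x : K => {y : K | ((x : ℕ → ℕ → E), (y : ℕ → ℕ → E)) ∈ windowRel m r}

lemma isOpenCover_windowCover (K : Set (ℕ → ℕ → E)) (m : ℕ) {r : ℝ} (hr : 0 < r) :
    IsOpenCover (windowCover K m r) := by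
  refine ⟨?_, eq_univ_of_forall fun y => ⟨_, ⟨y, rfl⟩, fun j _ i _ => by simpa using hr⟩⟩
  rintro _ ⟨x, rfl⟩
  exact (isOpen_setOf_windowRel (x : ℕ → ℕ → E) m r).preimage continuous_subtype_val

lemma dist_lt_of_mem_iterJoin_windowCover {g : ℕ → ℕ → E} {m N : ℕ} {r : ℝ}
    {V : Set (orbitClosure g)} (hV : V ∈ iterJoin (shiftOn g) (windowCover (orbitClosure g) m r) N)
    {q q' : orbitClosure g} (hq : q ∈ V) (hq' : q' ∈ V) {J i : ℕ} (hJ : J < N) (hi : i < m) :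
    dist ((q : ℕ → ℕ → E) J i) ((q' : ℕ → ℕ → E) J i) < 2 * r := by
  obtain ⟨u, hu, rfl⟩ := hV
  obtain ⟨z, hz⟩ := hu ⟨J, hJ⟩
  have hzV (p) (hp : p ∈ ⋂ j : Fin N, (shiftOn g)^[j] ⁻¹' u j) :
      dist ((z : ℕ → ℕ → E) 0 i) ((p : ℕ → ℕ → E) J i) < r := by
    have hpJ := mem_iInter.1 hp ⟨J, hJ⟩
    rw [mem_preimage, ← hz] at hpJ
    simpa [shiftOn_iterate_apply] using hpJ 0 (by omega) i hi
  linarith [dist_triangle_left ((q : ℕ → ℕ → E) J i) ((q' : ℕ → ℕ → E) J i)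
    ((z : ℕ → ℕ → E) 0 i), hzV q hq, hzV q' hq']

lemma coverNum_iterJoin_le_windowCover {f g : ℕ → ℕ → E} [CompactSpace (orbitClosure g)]
    {𝒰 : Set (Set (orbitClosure f))} {m : ℕ} {s : ℝ} (hs : 0 < s)
    (hleb : ∀ x : orbitClosure f, ∃ U ∈ 𝒰, ∀ y : orbitClosure f,
      ((x : ℕ → ℕ → E), (y : ℕ → ℕ → E)) ∈ windowRel m s → y ∈ U)
    (hfg : ∀ k i, dist (f k i) (g k i) < s / 8) (n : ℕ) :
    coverNum (iterJoin (shiftOn f) 𝒰 n) ≤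
      coverNum (iterJoin (shiftOn g) (windowCover (orbitClosure g) m (s / 4)) (n + m)) := by
  choose u hu𝒰 hu using hleb
  let τ : Set (orbitClosure g) → ℕ := fun V => Classical.epsilon fun t => orbitPoint g t ∈ V
  refine coverNum_le_of_forall_exists (isOpenCover_iterJoin (continuous_shiftOn g)
      (isOpenCover_windowCover _ m (by positivity)) _)
    (fun V => ⋂ j : Fin n, (shiftOn f)^[j] ⁻¹' u ((shiftOn f)^[j] (orbitPoint f (τ V))))
    (fun V _ => ⟨_, fun j => hu𝒰 _, rfl⟩) fun x => ?_
  obtain ⟨t, hxt⟩ := exists_windowRel_orbitPoint x (n + m) (s := s / 8) (by positivity)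
  refine ⟨orbitPoint g t, fun V hV htV => mem_iInter.2 fun j => hu _ _ fun j' hj' i hi => ?_⟩
  have hτV : orbitPoint g (τ V) ∈ V :=
    Classical.epsilon_spec (p := fun t => orbitPoint g t ∈ V) ⟨t, htV⟩
  have hJ : j' + j < n + m := by omega
  simp only [shiftOn_iterate_apply, orbitPoint_apply]
  have hτ := hfg (τ V + (j' + j)) i
  have hτt := dist_lt_of_mem_iterJoin_windowCover hV hτV htV hJ hi
  have ht := hfg (t + (j' + j)) i
  have hx := hxt _ hJ i (by omega)
  simp only [orbitPoint_apply] at hτt hx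
  rw [dist_comm] at ht hx
  -- `s/8 + s/2 + s/8 + s/8 < s` along `f` at `τ V`, `g` at `τ V`, `g` at `t`, `f` at `t`, `x`
  linarith [dist_triangle4 (f (τ V + (j' + j)) i) (g (τ V + (j' + j)) i) (g (t + (j' + j)) i)
    (f (t + (j' + j)) i), dist_triangle (f (τ V + (j' + j)) i) (f (t + (j' + j)) i)
    ((x : ℕ → ℕ → E) (j' + j) i)]

end Window

lemma isCompact_orbitClosure_famSeq {I : Type*} {F : I → ℕ → ℂ}
    (hF : ∀ i, ∃ M : ℝ, ∀ n, ‖F i n‖ ≤ M) : IsCompact (orbitClosure (famSeq F)) := by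
  choose M hM using hF
  exact isCompact_orbitClosure (isCompact_univ_pi fun i => isCompact_closedBall (0 : ℂ) (M i))
    fun n i _ => mem_closedBall_zero_iff.2 (hM i n)

lemma dist_lt_of_iSup_nnnorm_sub_lt {ι κ E : Type*} [SeminormedAddCommGroup E]
    {F G : ι → κ → E} {δ : ℝ} (h : (⨆ i, ⨆ k, (‖G i k - F i k‖₊ : ℝ≥0∞)) < ENNReal.ofReal δ)
    (i : ι) (k : κ) : dist (F i k) (G i k) < δ := by
  have hik := (le_iSup₂ (f := fun i k => (‖G i k - F i k‖₊ : ℝ≥0∞)) i k).trans_lt h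
  rw [dist_comm, dist_eq_norm]
  simpa using (ENNReal.lt_ofReal_iff_toReal_lt ENNReal.coe_ne_top).1 hik

end Anqie

open Anqie

/-- Let `F = (f_i)_{i ∈ ℕ}` be a sequence of bounded functions
`ℕ → ℂ` with `AE(F) < +∞`. For every `ε > 0` there is `δ > 0` such that every
sequence `G = (g_i)` of bounded functions with `sup_i ‖g_i − f_i‖_∞ < δ` satisfies
`AE(G) > AE(F) − ε`. -/
theorem anqie_entropy_family_semicontinuous (F : ℕ → ℕ → ℂ)
    (hFb : ∀ i, ∃ M : ℝ, ∀ n, ‖F i n‖ ≤ M) (hFfin : Anqie.AEfam F < ⊤) :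
    ∀ ε : ℝ, 0 < ε → ∃ δ : ℝ, 0 < δ ∧ ∀ G : ℕ → ℕ → ℂ,
      (∀ i, ∃ M : ℝ, ∀ n, ‖G i n‖ ≤ M) →
      (⨆ i : ℕ, ⨆ n : ℕ, (‖G i n - F i n‖₊ : ENNReal)) < ENNReal.ofReal δ →
      Anqie.AEfam F - (ε : EReal) < Anqie.AEfam G := by
  intro ε hε
  have := isCompact_iff_compactSpace.1 (isCompact_orbitClosure_famSeq hFb)
  obtain ⟨𝒰, h𝒰, hF𝒰⟩ := exists_isOpenCover_lt_coverEntropy (shiftOn (famSeq F)) hFfin.ne hε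
  obtain ⟨m, s, hs, hleb⟩ := lebesgue_number_windowRel h𝒰
  refine ⟨s / 8, by positivity, fun G hGb hGF => ?_⟩
  have := isCompact_iff_compactSpace.1 (isCompact_orbitClosure_famSeq hGb)
  calc AEfam F - ε < coverEntropy (shiftOn (famSeq F)) 𝒰 := hF𝒰
    _ ≤ coverEntropy (shiftOn (famSeq G)) (windowCover _ m (s / 4)) :=
      coverEntropy_le_of_coverNum_le m <| coverNum_iterJoin_le_windowCover hs hleb
        fun k i => dist_lt_of_iSup_nnnorm_sub_lt hGF i k
    _ ≤ AEfam G := coverEntropy_le_entropy _ (isOpenCover_windowCover _ m (by positivity))
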